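/- arXiv:math/9502233 — 7 statements merged into one kernel-verified Lean document; each statement's English description precedes it below -/
import Mathlib

section
/- For any filter D on a set κ, the cardinal reg(D) = min{θ : D is not θ-regular} is a regular cardinal. -/
universe u v

/-- The filter `D` is `θ`-regular: there are sets `A ε ∈ D` for `ε < θ` such that
the intersection of any infinitely many of them is empty. -/
def IsRegularFilter {κ : Type u} (D : Filter κ) (θ : Cardinal.{v}) : Prop :=
  ∃ A : Ordinal.{v} → Set κ,
    (∀ ε : Ordinal.{v}, ε < θ.ord → A ε ∈ D) ∧
    ∀ T : Set Ordinal.{v}, T ⊆ Set.Iio θ.ord → T.Infinite → ⋂ ε ∈ T, A ε = ∅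

/-!
A family witnessing regularity can be indexed by any set of the right cardinality, and two such
families combine into one indexed by a Σ-type: intersect the outer set with the inner one. If
`θ = reg(D)` were singular, the ordinals below `θ` would split into `cof θ < θ` initial segments,
each of size `< θ`; by minimality `D` is regular on the index set of the segments and on each
segment, hence on their Σ-type and so on `θ`, a contradiction. `reg(D)` is infinite because over a
finite index set there is no infinite intersection to control, and it exists because by pigeonhole a regular family
over more than `2 ^ |κ|` indices would repeat one set of `D` infinitely often.
-/

open Cardinal Set

universe w w'

theorem Set.Infinite.image_fst_or_exists_preimage_mk {ι : Type w} {β : ι → Type w'}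
    {T : Set (Σ i, β i)} (hT : T.Infinite) :
    (Sigma.fst '' T).Infinite ∨ ∃ i, (Sigma.mk i ⁻¹' T).Infinite := by
  by_contra! h
  obtain ⟨hfst, hfib⟩ := h
  refine hT ((hfst.biUnion fun i _ => (hfib i).image (Sigma.mk i)).subset ?_)
  rintro ⟨i, b⟩ hib
  exact mem_biUnion ⟨_, hib, rfl⟩ ⟨b, hib, rfl⟩

namespace Filter

variable {κ : Type u} (D : Filter κ)

/-- Regularity indexed by an arbitrary type `ι` instead of the ordinals below `θ.ord`. -/
def IsRegularOn (ι : Type w) : Prop :=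
  ∃ A : ι → Set κ, (∀ i, A i ∈ D) ∧ ∀ T : Set ι, T.Infinite → ⋂ i ∈ T, A i = ∅

variable {D}

theorem IsRegularOn.of_injective {ι : Type w} {σ : Type w'} (h : D.IsRegularOn ι) {g : σ → ι}
    (hg : g.Injective) : D.IsRegularOn σ := by
  obtain ⟨A, hAD, hA⟩ := h
  refine ⟨fun i => A (g i), fun i => hAD _, fun T hT => ?_⟩
  simpa only [biInter_image] using hA (g '' T) (hT.image hg.injOn)

theorem isRegularOn_congr {ι : Type w} {σ : Type w'}
    (h : Cardinal.lift.{w'} #ι = Cardinal.lift.{w} #σ) : D.IsRegularOn ι ↔ D.IsRegularOn σ := by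
  obtain ⟨e⟩ := Cardinal.lift_mk_eq'.1 h
  exact ⟨fun hι => hι.of_injective e.symm.injective, fun hσ => hσ.of_injective e.injective⟩

theorem isRegularOn_of_finite (ι : Type w) [Finite ι] : D.IsRegularOn ι :=
  ⟨fun _ => univ, fun _ => univ_mem, fun T hT => (hT T.toFinite).elim⟩

theorem isRegularOn_Iio_ord_iff (θ : Cardinal.{v}) :
    D.IsRegularOn (Iio θ.ord) ↔ IsRegularFilter D θ := by
  constructor
  · rintro ⟨A, hAD, hA⟩
    classical
    refine ⟨fun ε => if h : ε < θ.ord then A ⟨ε, h⟩ else univ,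
      fun ε hε => by simpa [hε] using hAD ⟨ε, hε⟩, fun T hTθ hT => ?_⟩
    have hT' : (Subtype.val ⁻¹' T : Set (Iio θ.ord)).Infinite :=
      hT.preimage (by rwa [Subtype.range_val])
    refine eq_empty_of_forall_notMem fun x hx => ?_
    have hx' : x ∈ ⋂ ε ∈ Subtype.val ⁻¹' T, A ε :=
      mem_iInter₂.2 fun ε hε => by
        simpa only [dif_pos (mem_Iio.1 ε.2)] using mem_iInter₂.1 hx ε hε
    rwa [hA _ hT'] at hx'
  · rintro ⟨A, hAD, hA⟩
    refine ⟨fun ε => A ε, fun ε => hAD _ ε.2, fun T hT => ?_⟩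
    simpa only [biInter_image] using hA (Subtype.val '' T) (by rintro _ ⟨ε, -, rfl⟩; exact ε.2)
      (hT.image Subtype.val_injective.injOn)

theorem isRegularFilter_iff {ι : Type w} {θ : Cardinal.{v}}
    (h : Cardinal.lift.{v} #ι = Cardinal.lift.{w} θ) : IsRegularFilter D θ ↔ D.IsRegularOn ι := by
  rw [← isRegularOn_Iio_ord_iff, isRegularOn_congr]
  simpa [Cardinal.lift_lift, eq_comm] using congrArg Cardinal.lift.{v + 1} h

theorem IsRegularOn.sigma {ι : Type w} {β : ι → Type w'} (hι : D.IsRegularOn ι)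
    (hβ : ∀ i, D.IsRegularOn (β i)) : D.IsRegularOn (Σ i, β i) := by
  obtain ⟨B, hBD, hB⟩ := hι
  choose A hAD hA using hβ
  refine ⟨fun x => B x.1 ∩ A x.1 x.2, fun x => inter_mem (hBD _) (hAD _ _), fun T hT => ?_⟩
  refine eq_empty_of_forall_notMem fun x hx => ?_
  rw [mem_iInter₂] at hx
  rcases hT.image_fst_or_exists_preimage_mk with hfst | ⟨i, hfib⟩
  · have hxB : x ∈ ⋂ i ∈ Sigma.fst '' T, B i :=
      biInter_image.symm ▸ mem_iInter₂.2 fun y hy => (hx y hy).1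
    rwa [hB _ hfst] at hxB
  · have hxA : x ∈ ⋂ b ∈ Sigma.mk i ⁻¹' T, A i b := mem_iInter₂.2 fun b hb => (hx _ hb).2
    rwa [hA i _ hfib] at hxA

theorem IsRegularOn.of_isCofinal {α : Type w} [Preorder α] [NoMaxOrder α] {s : Set α}
    (hs : IsCofinal s) (hs_reg : D.IsRegularOn s) (hIio : ∀ x : α, D.IsRegularOn (Iio x)) :
    D.IsRegularOn α := by
  have hlt : ∀ a : α, ∃ x : s, a < x := fun a =>
    let ⟨b, hab⟩ := exists_gt a
    let ⟨x, hxs, hbx⟩ := hs b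
    ⟨⟨x, hxs⟩, hab.trans_le hbx⟩
  choose g hg using hlt
  refine (hs_reg.sigma fun x => hIio x).of_injective (g := fun a => ⟨g a, ⟨a, hg a⟩⟩) ?_
  intro a b hab
  exact congrArg (fun y : Σ x : s, Iio (x : α) => (y.2 : α)) hab

theorem IsRegularOn.lift_mk_le [D.NeBot] {ι : Type w} [Infinite ι] (h : D.IsRegularOn ι) :
    Cardinal.lift.{u} #ι ≤ Cardinal.lift.{w} #(Set κ) := by
  obtain ⟨A, hAD, hA⟩ := h
  by_contra! hlt
  let f : ULift.{u} ι → ULift.{w} (Set κ) := fun i => ⟨A i.down⟩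
  obtain ⟨a, ha⟩ := Cardinal.exists_infinite_fiber f (by simpa using hlt)
  have hfib : (f ⁻¹' {a}).Infinite := infinite_coe_iff.1 ha
  obtain ⟨⟨i⟩, hi⟩ := hfib.nonempty
  obtain ⟨x, hx⟩ := D.nonempty_of_mem (hAD i)
  have hxT : x ∈ ⋂ j ∈ ULift.down '' (f ⁻¹' {a}), A j := by
    rw [biInter_image, mem_iInter₂]
    rintro ⟨j⟩ hj
    have hji : A j = A i := congrArg ULift.down (hj.trans hi.symm)
    exact hji ▸ hx
  rwa [hA _ (hfib.image ULift.down_injective.injOn)] at hxT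

end Filter

open Filter

theorem isRegularFilter_of_lt_aleph0 {κ : Type u} (D : Filter κ) {θ : Cardinal.{v}}
    (hθ : θ < ℵ₀) : IsRegularFilter D θ := by
  have : Finite θ.ord.ToType := Cardinal.lt_aleph0_iff_finite.1 (by simpa using hθ)
  exact (isRegularFilter_iff (ι := θ.ord.ToType) (by simp)).2 (isRegularOn_of_finite _)

theorem exists_not_isRegularFilter {κ : Type u} (D : Filter κ) [D.NeBot] :
    ∃ θ : Cardinal.{u}, ¬ IsRegularFilter D θ := by
  set θ := max (Order.succ #(Set κ)) ℵ₀
  refine ⟨θ, fun hθ => ?_⟩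
  have : Infinite θ.ord.ToType := Cardinal.infinite_iff.2 (by simp [θ])
  have hle : θ ≤ #(Set κ) := by
    simpa using ((isRegularFilter_iff (ι := θ.ord.ToType) (by simp)).1 hθ).lift_mk_le
  exact (Order.lt_succ #(Set κ)).not_ge ((le_max_left _ _).trans hle)

theorem isRegularFilter_of_cof_ord_lt {κ : Type u} {D : Filter κ} {θ : Cardinal.{v}}
    (hθ : ℵ₀ ≤ θ) (hcof : θ.ord.cof < θ) (h : ∀ c < θ, IsRegularFilter D c) :
    IsRegularFilter D θ := by
  have := Cardinal.noMaxOrder hθ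
  obtain ⟨s, hs, hs_card⟩ := Order.exists_cof_eq θ.ord.ToType
  rw [Ordinal.cof_toType] at hs_card
  refine (isRegularFilter_iff (by simp)).2 (IsRegularOn.of_isCofinal hs ?_ fun x => ?_)
  · exact (isRegularFilter_iff (by simp [hs_card])).1 (h _ hcof)
  · have hx : #(Iio x) < θ := by simpa using Cardinal.mk_Iio_lt x (by simp)
    exact (isRegularFilter_iff (by simp)).1 (h _ hx)

/-- `reg(D) = min{θ : D is not θ-regular}` is a regular cardinal. -/
theorem stmt_10 {κ : Type u} (D : Filter κ) [D.NeBot] :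
    (sInf {θ : Cardinal.{u} | ¬ IsRegularFilter D θ}).IsRegular := by
  set S := {θ : Cardinal.{u} | ¬ IsRegularFilter D θ}
  have hS : sInf S ∈ S := csInf_mem (exists_not_isRegularFilter D)
  have hlt : ∀ c < sInf S, IsRegularFilter D c := fun c hc => not_not.1 (notMem_of_lt_csInf' hc)
  have haleph0 : ℵ₀ ≤ sInf S := not_lt.1 fun h => hS (isRegularFilter_of_lt_aleph0 D h)
  exact ⟨haleph0, not_lt.1 fun hcof => hS (isRegularFilter_of_cof_ord_lt haleph0 hcof hlt)⟩
end

section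
/- Let D be a filter on κ and θ a cardinal. If θ < reg_*(D), then some filter extending D is θ-regular. Consequently reg_*(D) = min{θ : no ultrafilter on κ extending D is θ-regular}. -/
universe u v

/-- There is a family of `θ` many `D`-positive sets such that no point lies in
infinitely many of them. -/
def StarFamily {κ : Type u} (D : Filter κ) (θ : Cardinal.{v}) : Prop :=
  ∃ A : Ordinal.{v} → Set κ,
    (∀ ε : Ordinal.{v}, ε < θ.ord → (A ε)ᶜ ∉ D) ∧
    ∀ i : κ, {ε : Ordinal.{v} | ε < θ.ord ∧ i ∈ A ε}.Finite

/-- `reg_*(D) = min{θ : there is no such θ-family of D-positive sets}`. -/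
noncomputable def regStar {κ : Type u} (D : Filter κ) : Cardinal.{u} :=
  sInf {θ : Cardinal.{u} | ¬ StarFamily D θ}

/-- monotonicity of regularity in the filter -/
lemma isRegularFilter_mono {κ : Type u} {E E' : Filter κ} {θ : Cardinal.{v}}
    (h : E' ≤ E) (hE : IsRegularFilter E θ) : IsRegularFilter E' θ := by
  obtain ⟨A, h1, h2⟩ := hE
  exact ⟨A, fun ε hε => h (h1 ε hε), h2⟩

/-- A regular proper filter extending `D` yields a star family for `D`. -/
lemma starFamily_of_regular {κ : Type u} {D E : Filter κ} [E.NeBot] {θ : Cardinal.{v}}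
    (hle : E ≤ D) (hE : IsRegularFilter E θ) : StarFamily D θ := by
  obtain ⟨A, h1, h2⟩ := hE
  refine ⟨A, fun ε hε hc => ?_, fun i => ?_⟩
  · have : (A ε) ∩ (A ε)ᶜ ∈ E := Filter.inter_mem (h1 ε hε) (hle hc)
    rw [Set.inter_compl_self] at this
    exact Filter.empty_notMem E this
  · by_contra hinf
    have hinf' : Set.Infinite {ε : Ordinal.{v} | ε < θ.ord ∧ i ∈ A ε} := hinf
    have := h2 {ε | ε < θ.ord ∧ i ∈ A ε} (fun ε hε => hε.1) hinf'
    have hi : i ∈ ⋂ ε ∈ {ε : Ordinal.{v} | ε < θ.ord ∧ i ∈ A ε}, A ε := by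
      simp only [Set.mem_iInter]
      exact fun ε hε => hε.2
    rw [this] at hi
    exact hi

/-- For large enough `θ` there is no star family. -/
lemma exists_not_starFamily {κ : Type u} (D : Filter κ) [D.NeBot] :
    ∃ θ : Cardinal.{u}, ¬ StarFamily D θ := by
  classical
  set c : Cardinal.{u} := 2 ^ Cardinal.mk κ + Cardinal.aleph0 with hc
  have hcinf : Cardinal.aleph0 ≤ c := le_add_self
  refine ⟨Order.succ c, fun hSF => ?_⟩
  obtain ⟨A, hpos, hfin⟩ := hSF
  set μ : Cardinal.{u} := Order.succ c with hμ
  -- map each ordinal below μ.ord to the set it indexes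
  set f : Set.Iio μ.ord → ULift.{u+1} (Set κ) := fun ε => ULift.up (A ε.val) with hf
  have hfib : ∀ X : ULift.{u+1} (Set κ),
      Cardinal.mk (f ⁻¹' {X}) ≤ Cardinal.lift.{u+1} c := by
    intro X
    rcases Set.eq_empty_or_nonempty X.down with hX | ⟨i, hi⟩
    · -- fiber over the empty set is empty
      have : f ⁻¹' {X} = ∅ := by
        ext ε
        simp only [Set.mem_preimage, Set.mem_singleton_iff, Set.mem_empty_iff_false, iff_false]
        intro hAε
        have hlt : ε.val < μ.ord := ε.prop
        apply hpos ε.val hlt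
        have : A ε.val = ∅ := by
          have := congrArg ULift.down hAε
          simpa [hf, hX] using this
        rw [this]
        simp [Filter.univ_mem]
      rw [this]
      simp
    · -- fiber over a nonempty set is finite
      have hsub : (Subtype.val '' (f ⁻¹' {X})) ⊆ {ε : Ordinal.{u} | ε < μ.ord ∧ i ∈ A ε} := by
        rintro ε ⟨⟨ε', hε'⟩, hmem, rfl⟩
        refine ⟨hε', ?_⟩
        have := congrArg ULift.down hmem
        simp only [hf] at this
        rw [this]
        exact hi
      have hfinfib : (Subtype.val '' (f ⁻¹' {X})).Finite := (hfin i).subset hsub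
      have : (f ⁻¹' {X}).Finite :=
        Set.Finite.of_finite_image hfinfib
          (Set.injOn_of_injective Subtype.val_injective)
      calc Cardinal.mk (f ⁻¹' {X}) ≤ Cardinal.aleph0 := le_of_lt (this.lt_aleph0)
        _ ≤ Cardinal.lift.{u+1} c := by
            rw [← Cardinal.lift_aleph0.{u+1, u}]
            exact Cardinal.lift_le.mpr hcinf
  have hcard := Cardinal.mk_le_mk_mul_of_mk_preimage_le f hfib
  rw [Ordinal.mk_Iio_ordinal, Cardinal.card_ord] at hcard
  have hrhs : Cardinal.mk (ULift.{u+1} (Set κ)) * Cardinal.lift.{u+1} c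
      ≤ Cardinal.lift.{u+1} c := by
    have h1 : Cardinal.mk (ULift.{u+1} (Set κ)) ≤ Cardinal.lift.{u+1} c := by
      rw [Cardinal.mk_uLift, Cardinal.mk_set]
      exact Cardinal.lift_le.mpr (le_trans le_self_add le_rfl)
    calc Cardinal.mk (ULift.{u+1} (Set κ)) * Cardinal.lift.{u+1} c
        ≤ Cardinal.lift.{u+1} c * Cardinal.lift.{u+1} c :=
          mul_le_mul' h1 le_rfl
      _ = Cardinal.lift.{u+1} c := by
          rw [← Cardinal.lift_mul, Cardinal.mul_eq_self hcinf]
  have : Cardinal.lift.{u+1} μ ≤ Cardinal.lift.{u+1} c := le_trans hcard hrhs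
  rw [Cardinal.lift_le] at this
  exact absurd this (not_le.mpr (Order.lt_succ c))

/-- The main construction: a star family yields a regular proper extension. -/
lemma regular_extension_of_starFamily {κ : Type u} (D : Filter κ) [D.NeBot]
    {θ : Cardinal.{u}} (hSF : StarFamily D θ) :
    ∃ D' : Filter κ, D'.NeBot ∧ D' ≤ D ∧ IsRegularFilter D' θ := by
  classical
  rcases lt_or_ge θ Cardinal.aleph0 with hθ | hθ
  · -- finite θ : trivial
    refine ⟨D, inferInstance, le_rfl, fun _ => Set.univ, fun _ _ => Filter.univ_mem,
      fun T hT hTinf => ?_⟩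
    exfalso
    have h1 : Cardinal.aleph0 ≤ Cardinal.mk T := by
      rw [Cardinal.infinite_iff.symm] at *
      exact hTinf.to_subtype
    have h2 : Cardinal.mk T ≤ Cardinal.mk (Set.Iio θ.ord) := Cardinal.mk_le_mk_of_subset hT
    rw [Ordinal.mk_Iio_ordinal, Cardinal.card_ord] at h2
    have := lt_of_le_of_lt (le_trans h1 h2)
      (Cardinal.lift_lt_aleph0.mpr hθ)
    exact absurd this (by simp)
  · -- infinite θ
    obtain ⟨A, hpos, hfin⟩ := hSF
    set S := Set.Iio θ.ord with hS
    have hSinf : Infinite S := by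
      rw [Cardinal.infinite_iff, Ordinal.mk_Iio_ordinal, Cardinal.card_ord,
        ← Cardinal.lift_aleph0.{u+1, u}, Cardinal.lift_le]
      exact hθ
    obtain ⟨E⟩ : Nonempty (Finset S ≃ S) :=
      Cardinal.eq.mp (Cardinal.mk_finset_of_infinite S)
    set P : Finset S → Set κ := fun s => A (E s).val with hP
    have hPpos : ∀ s : Finset S, (P s)ᶜ ∉ D := fun s => hpos (E s).val (E s).prop
    set G : S → Set κ := fun σ => {i | ∃ s : Finset S, σ ∈ s ∧ i ∈ P s} with hG
    -- each point lies in `G σ` for only finitely many `σ`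
    have hGfin : ∀ i : κ, {σ : S | i ∈ G σ}.Finite := by
      intro i
      have hV : {σ : S | i ∈ A σ.val}.Finite := by
        have : {σ : S | i ∈ A σ.val}
            ⊆ Subtype.val ⁻¹' {ε : Ordinal.{u} | ε < θ.ord ∧ i ∈ A ε} := by
          intro σ hσ
          exact ⟨σ.prop, hσ⟩
        exact (((hfin i).preimage (Set.injOn_of_injective Subtype.val_injective)).subset this)
      have hFi : {s : Finset S | i ∈ P s}.Finite := by
        have : {s : Finset S | i ∈ P s} = E ⁻¹' {σ : S | i ∈ A σ.val} := rfl
        rw [this]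
        exact hV.preimage (Set.injOn_of_injective E.injective)
      have : {σ : S | i ∈ G σ} ⊆ ⋃ s ∈ {s : Finset S | i ∈ P s}, (s : Set S) := by
        rintro σ ⟨s, hσs, his⟩
        exact Set.mem_biUnion his hσs
      exact (Set.Finite.biUnion hFi (fun s _ => s.finite_toSet)).subset this
    set D' : Filter κ := D ⊓ ⨅ σ : S, Filter.principal (G σ) with hD'
    have hGmem : ∀ σ : S, G σ ∈ D' := by
      intro σ
      have h1 : D' ≤ Filter.principal (G σ) :=
        le_trans inf_le_right (iInf_le _ σ)
      exact h1 (Filter.mem_principal_self _)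
    have hle : D' ≤ D := inf_le_left
    have hne : D'.NeBot := by
      rw [← Filter.forall_mem_nonempty_iff_neBot]
      intro s hs
      rw [hD', Filter.mem_inf_iff] at hs
      obtain ⟨X, hX, Y, hY, rfl⟩ := hs
      rw [Filter.mem_iInf] at hY
      obtain ⟨I, Ifin, V, hV, rfl⟩ := hY
      haveI := Ifin.fintype
      set t : Finset S := I.toFinset with ht
      -- `X ∩ P t` is nonempty since `P t` is `D`-positive
      have hXP : (X ∩ P t).Nonempty := by
        rcases Set.eq_empty_or_nonempty (X ∩ P t) with h | h
        · exfalso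
          apply hPpos t
          refine Filter.mem_of_superset hX ?_
          intro x hx hxP
          exact Set.eq_empty_iff_forall_notMem.mp h x ⟨hx, hxP⟩
        · exact h
      obtain ⟨i, hiX, hiP⟩ := hXP
      refine ⟨i, hiX, ?_⟩
      rw [Set.mem_iInter]
      rintro ⟨σ, hσ⟩
      have hσt : σ ∈ t := Set.mem_toFinset.mpr hσ
      have hiG : i ∈ G σ := ⟨t, hσt, hiP⟩
      have := hV ⟨σ, hσ⟩
      rw [Filter.mem_principal] at this
      exact this hiG
    refine ⟨D', hne, hle, ?_⟩
    refine ⟨fun ε => if h : ε < θ.ord then G ⟨ε, h⟩ else Set.univ, fun ε hε => ?_,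
      fun T hT hTinf => ?_⟩
    · simp only [dif_pos hε]
      exact hGmem _
    · by_contra hne'
      obtain ⟨i, hi⟩ := Set.nonempty_iff_ne_empty.mpr hne'
      rw [Set.mem_iInter₂] at hi
      apply hTinf
      have hsub : T ⊆ Subtype.val '' {σ : S | i ∈ G σ} := by
        intro ε hε
        have hεθ : ε < θ.ord := hT hε
        have := hi ε hε
        simp only [dif_pos hεθ] at this
        exact ⟨⟨ε, hεθ⟩, this, rfl⟩
      exact ((hGfin i).image _).subset hsub

/-- If `θ < reg_*(D)` then some (proper) filter extending `D` is `θ`-regular;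
consequently `reg_*(D)` is the least `θ` such that no ultrafilter extending `D`
is `θ`-regular. -/
theorem stmt_11 {κ : Type u} (D : Filter κ) [D.NeBot] :
    (∀ θ : Cardinal.{u}, θ < regStar D →
      ∃ D' : Filter κ, D'.NeBot ∧ D' ≤ D ∧ IsRegularFilter D' θ) ∧
    regStar D =
      sInf {θ : Cardinal.{u} |
        ¬ ∃ U : Ultrafilter κ, (U : Filter κ) ≤ D ∧ IsRegularFilter (↑U : Filter κ) θ} := by
  have hne : {θ : Cardinal.{u} | ¬ StarFamily D θ}.Nonempty := exists_not_starFamily D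
  have hmem : ¬ StarFamily D (regStar D) := csInf_mem hne
  have part1 : ∀ θ : Cardinal.{u}, θ < regStar D →
      ∃ D' : Filter κ, D'.NeBot ∧ D' ≤ D ∧ IsRegularFilter D' θ := by
    intro θ hθ
    have hSF : StarFamily D θ := by
      by_contra h
      have hmem' : θ ∈ {θ : Cardinal.{u} | ¬ StarFamily D θ} := h
      have : regStar D ≤ θ := csInf_le (OrderBot.bddBelow _) hmem'
      exact absurd this (not_le.mpr hθ)
    exact regular_extension_of_starFamily D hSF
  refine ⟨part1, ?_⟩
  have hRS : regStar D ∈ {θ : Cardinal.{u} |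
      ¬ ∃ U : Ultrafilter κ, (U : Filter κ) ≤ D ∧ IsRegularFilter (↑U : Filter κ) θ} := by
    rintro ⟨U, hU, hreg⟩
    exact hmem (starFamily_of_regular hU hreg)
  apply le_antisymm
  · refine le_csInf ⟨_, hRS⟩ ?_
    intro θ hθ
    by_contra hlt
    rw [not_le] at hlt
    obtain ⟨D', hD'ne, hD'le, hD'reg⟩ := part1 θ hlt
    haveI := hD'ne
    refine hθ ⟨Ultrafilter.of D', le_trans (Ultrafilter.of_le D') hD'le, ?_⟩
    exact isRegularFilter_mono (Ultrafilter.of_le D') hD'reg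
  · exact csInf_le (OrderBot.bddBelow _) hRS
end

section
/- Let D be a filter on κ, ⟨A₁, A₂⟩ a partition of κ, and λ_i nonzero cardinals for i < κ. Then |∏_{i<κ} λ_i / D| = |∏_{i<κ} λ_i / (D+A₁)| · |∏_{i<κ} λ_i / (D+A₂)|, where if D+A_j is improper the corresponding factor is 1. -/
/-!
Gluing along the partition `⟨A, Aᶜ⟩` identifies `∏ λ_i / D` with
`∏ λ_i / (D + A) × ∏ λ_i / (D + Aᶜ)`: a class goes to the pair of its classes, and the classes
of `g` and `h` come back as the class of the function that is `g` on `A` and `h` off `A`. This is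
well defined because agreement `D`-almost everywhere is agreement `(D + A)`-almost everywhere
together with `(D + Aᶜ)`-almost everywhere. An improper `D + A` needs no separate treatment:
all functions agree modulo `⊥`.
-/

universe u

/-- The cardinality of the reduced product `∏_{i<κ} lams i / E`. -/
noncomputable def redCard {κ : Type u} (E : Filter κ) (lams : κ → Cardinal.{u}) :
    Cardinal.{u + 1} :=
  Cardinal.mk
    (Quot (fun f g : {f : κ → Ordinal.{u} // ∀ i, f i < (lams i).ord} =>
      {i | f.1 i = g.1 i} ∈ E))

open Filter Set

theorem Filter.EventuallyEq.piecewise {κ β : Type*} {l : Filter κ} {A : Set κ}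
    [DecidablePred (· ∈ A)] {f f' g g' : κ → β} (hf : f =ᶠ[l ⊓ 𝓟 A] f')
    (hg : g =ᶠ[l ⊓ 𝓟 Aᶜ] g') : A.piecewise f g =ᶠ[l] A.piecewise f' g' := by
  filter_upwards [eventuallyEq_inf_principal_iff.1 hf, eventuallyEq_inf_principal_iff.1 hg]
    with i hfi hgi
  by_cases hi : i ∈ A
  · simp [hi, hfi hi]
  · simp [hi, hgi hi]

def ReducedProd {κ α : Type*} (s : κ → Set α) (E : Filter κ) : Type _ :=
  Quot fun f g : {f : κ → α // ∀ i, f i ∈ s i} => f.1 =ᶠ[E] g.1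

namespace ReducedProd

variable {κ α : Type*} (s : κ → Set α)

open Classical in
noncomputable def glue (A : Set κ) (f g : {f : κ → α // ∀ i, f i ∈ s i}) :
    {f : κ → α // ∀ i, f i ∈ s i} :=
  ⟨A.piecewise f.1 g.1, fun i => by by_cases hi : i ∈ A <;> simp [hi, f.2 i, g.2 i]⟩

open Classical in
noncomputable def equivProdInfPrincipal (D : Filter κ) (A : Set κ) :
    ReducedProd s D ≃ ReducedProd s (D ⊓ 𝓟 A) × ReducedProd s (D ⊓ 𝓟 Aᶜ) where
  toFun := Quot.lift (fun f => (Quot.mk _ f, Quot.mk _ f)) fun _ _ h =>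
    Prod.ext (Quot.sound (h.filter_mono inf_le_left)) (Quot.sound (h.filter_mono inf_le_left))
  invFun p := Quot.lift₂ (fun f g => Quot.mk _ (glue s A f g))
    (fun _ _ _ h => Quot.sound ((EventuallyEq.refl _ _).piecewise h))
    (fun _ _ _ h => Quot.sound (h.piecewise (EventuallyEq.refl _ _))) p.1 p.2
  left_inv q := by
    induction q using Quot.ind with
    | mk f => exact congrArg (Quot.mk _) (Subtype.ext (piecewise_same A f.1))
  right_inv p := by
    obtain ⟨q₁, q₂⟩ := p
    induction q₁ using Quot.ind with | mk f => ?_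
    induction q₂ using Quot.ind with | mk g => ?_
    exact Prod.ext
      (Quot.sound ((piecewise_eqOn A f.1 g.1).eventuallyEq.filter_mono inf_le_right))
      (Quot.sound ((piecewise_eqOn_compl A f.1 g.1).eventuallyEq.filter_mono inf_le_right))

theorem mk_eq_mk_mul_mk (D : Filter κ) (A : Set κ) :
    Cardinal.mk (ReducedProd s D) =
      Cardinal.mk (ReducedProd s (D ⊓ 𝓟 A)) * Cardinal.mk (ReducedProd s (D ⊓ 𝓟 Aᶜ)) := by
  rw [Cardinal.mk_congr (equivProdInfPrincipal s D A), Cardinal.mk_prod, Cardinal.lift_id,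
    Cardinal.lift_id]

end ReducedProd

theorem stmt_14_general {κ : Type u} (D : Filter κ) (A₁ A₂ : Set κ)
    (hdisj : A₁ ∩ A₂ = ∅) (hcover : A₁ ∪ A₂ = Set.univ)
    (lams : κ → Cardinal.{u}) :
    redCard D lams =
      redCard (D ⊓ Filter.principal A₁) lams * redCard (D ⊓ Filter.principal A₂) lams := by
  obtain rfl : A₂ = A₁ᶜ := (IsCompl.of_eq hdisj hcover).compl_eq.symm
  exact ReducedProd.mk_eq_mk_mul_mk (fun i => Iio (lams i).ord) D A₁

/-- For a partition `⟨A₁, A₂⟩` of `κ`,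
`|∏ lams i / D| = |∏ lams i / (D+A₁)| * |∏ lams i / (D+A₂)|`
(where `D+A` is the filter generated by `D ∪ {A}`, possibly improper, in which case
the corresponding factor is `1`). -/
theorem stmt_14 {κ : Type u} (D : Filter κ) (A₁ A₂ : Set κ)
    (hdisj : A₁ ∩ A₂ = ∅) (hcover : A₁ ∪ A₂ = Set.univ)
    (lams : κ → Cardinal.{u}) (hpos : ∀ i, 0 < lams i) :
    redCard D lams =
      redCard (D ⊓ Filter.principal A₁) lams * redCard (D ⊓ Filter.principal A₂) lams :=
  stmt_14_general D A₁ A₂ hdisj hcover lams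
end

section
/- Let D be a filter on κ, ⟨λ_i : i < κ⟩ a sequence of cardinals, and μ an infinite cardinal. Then D^{[μ]} := {A ⊆ κ : |∏_{i<κ} λ_i / (D + (κ\A))| < μ} is a filter on κ; moreover if μ ≤ |∏_{i<κ} λ_i / D| then D^{[μ]} is a proper filter. -/
/-
The sets `A` with `|∏ λ_i / (D + (κ∖A))| < μ` form a filter because the reduced product grows
when the filter shrinks, and `D + (κ∖(A ∩ B))` is the intersection of `D + (κ∖A)` and
`D + (κ∖B)`, so its reduced product embeds into the product of theirs, of size `< μ` as `μ` is
infinite. Properness: for `A = ∅` the reduced product is the one modulo `D` itself.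
-/

universe u

open Filter

section

variable {κ : Type u} (lams : κ → Cardinal.{u})

lemma redCard_rel_equivalence (E : Filter κ) :
    Equivalence (fun f g : {f : κ → Ordinal.{u} // ∀ i, f i < (lams i).ord} =>
      {i | f.1 i = g.1 i} ∈ E) :=
  ⟨fun f => EventuallyEq.refl E f.1, EventuallyEq.symm, EventuallyEq.trans⟩

lemma redCard_mono {E F : Filter κ} (h : E ≤ F) : redCard E lams ≤ redCard F lams := by
  refine Cardinal.mk_le_of_surjective
    (f := Quot.lift (Quot.mk _) fun f g hfg => Quot.sound (h hfg)) fun q => ?_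
  induction q using Quot.ind with
  | mk f => exact ⟨Quot.mk _ f, rfl⟩

lemma redCard_sup_le_mul (E F : Filter κ) :
    redCard (E ⊔ F) lams ≤ redCard E lams * redCard F lams := by
  rw [redCard, redCard, redCard, Cardinal.mul_def]
  refine Cardinal.mk_le_of_injective
    (f := Quot.lift (fun f => (Quot.mk _ f, Quot.mk _ f))
      fun f g hfg => Prod.ext (Quot.sound (mem_sup.1 hfg).1) (Quot.sound (mem_sup.1 hfg).2))
    fun p q => ?_
  induction p using Quot.ind with
  | mk f =>
  induction q using Quot.ind with
  | mk g =>
  intro hfg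
  simp only [Prod.mk.injEq, Quot.eq] at hfg
  exact Quot.sound (mem_sup.2
    ⟨(redCard_rel_equivalence lams E).eqvGen_iff.1 hfg.1,
      (redCard_rel_equivalence lams F).eqvGen_iff.1 hfg.2⟩)

lemma redCard_bot_le_one : redCard ⊥ lams ≤ 1 := by
  rw [redCard, Cardinal.le_one_iff_subsingleton]
  refine ⟨fun p q => ?_⟩
  induction p using Quot.ind with
  | mk f =>
  induction q using Quot.ind with
  | mk g => exact Quot.sound mem_bot

end

/-- `D^{[μ]} = {A : |∏ lams i / (D + (κ∖A))| < μ}` is a filter on `κ`, and it is a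
proper filter if `μ ≤ |∏ lams i / D|`. -/
theorem stmt_15 {κ : Type u} (D : Filter κ) (lams : κ → Cardinal.{u})
    (μ : Cardinal.{u + 1}) (hμ : Cardinal.aleph0 ≤ μ) :
    (Set.univ ∈ {A : Set κ | redCard (D ⊓ Filter.principal Aᶜ) lams < μ} ∧
      (∀ A B : Set κ, redCard (D ⊓ Filter.principal Aᶜ) lams < μ → A ⊆ B →
        redCard (D ⊓ Filter.principal Bᶜ) lams < μ) ∧
      (∀ A B : Set κ, redCard (D ⊓ Filter.principal Aᶜ) lams < μ →
        redCard (D ⊓ Filter.principal Bᶜ) lams < μ →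
        redCard (D ⊓ Filter.principal (A ∩ B)ᶜ) lams < μ)) ∧
    (μ ≤ redCard D lams → ¬ redCard (D ⊓ Filter.principal (∅ : Set κ)ᶜ) lams < μ) := by
  refine ⟨⟨?_, fun A B hA hAB => ?_, fun A B hA hB => ?_⟩, fun h => ?_⟩
  · simp only [Set.mem_ofPred_eq, Set.compl_univ, principal_empty, inf_bot_eq]
    exact (redCard_bot_le_one lams).trans_lt (Cardinal.one_lt_aleph0.trans_le hμ)
  · have hle : D ⊓ 𝓟 Bᶜ ≤ D ⊓ 𝓟 Aᶜ :=
      inf_le_inf_left D (principal_mono.2 (Set.compl_subset_compl.2 hAB))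
    exact (redCard_mono lams hle).trans_lt hA
  · rw [Set.compl_inter, ← sup_principal, inf_sup_left]
    exact (redCard_sup_le_mul lams _ _).trans_lt (Cardinal.mul_lt_of_lt hμ hA hB)
  · rwa [Set.compl_empty, principal_univ, inf_top_eq, not_lt]
end

section
/- Let D be a filter on κ such that the Boolean algebra P(κ)/D satisfies the μ⁺-chain condition, and let λ̄ = ⟨λ_i : i < κ⟩ be a sequence of cardinals. If T⁰_D(λ̄) > μ, then T⁰_D(λ̄) = T¹_D(λ̄) = T²_D(λ̄) and the supremum in the definition of T⁰_D(λ̄) is attained. -/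
universe u

/-- `f ≠_D g` : `f` and `g` differ on a set of the filter `D`. -/
def neD {κ : Type u} (D : Filter κ) (f g : κ → Ordinal.{u}) : Prop :=
  {i | f i ≠ g i} ∈ D

/-- `T⁰_D(λ̄)`: sup of cardinalities of pairwise `≠_D` families in `∏ lams i`. -/
noncomputable def T0 {κ : Type u} (D : Filter κ) (lams : κ → Cardinal.{u}) : Cardinal.{u} :=
  sSup {c : Cardinal.{u} | ∃ f : Ordinal.{u} → κ → Ordinal.{u},
    (∀ α : Ordinal.{u}, α < c.ord → ∀ i : κ, f α i < (lams i).ord) ∧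
    (∀ α β : Ordinal.{u}, α < β → β < c.ord → neD D (f α) (f β))}

/-- `T¹_D(λ̄)`: min of cardinalities of maximal pairwise `≠_D` families. -/
noncomputable def T1 {κ : Type u} (D : Filter κ) (lams : κ → Cardinal.{u}) : Cardinal.{u} :=
  sInf {c : Cardinal.{u} | ∃ f : Ordinal.{u} → κ → Ordinal.{u},
    (∀ α : Ordinal.{u}, α < c.ord → ∀ i : κ, f α i < (lams i).ord) ∧
    (∀ α β : Ordinal.{u}, α < β → β < c.ord → neD D (f α) (f β)) ∧
    (∀ g : κ → Ordinal.{u}, (∀ i : κ, g i < (lams i).ord) →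
      ∃ α : Ordinal.{u}, α < c.ord ∧ ¬ neD D g (f α))}

/-- `T²_D(λ̄)`. -/
noncomputable def T2 {κ : Type u} (D : Filter κ) (lams : κ → Cardinal.{u}) : Cardinal.{u} :=
  sInf {c : Cardinal.{u} | ∃ f : Ordinal.{u} → κ → Ordinal.{u},
    (∀ α : Ordinal.{u}, α < c.ord → ∀ i : κ, f α i < (lams i).ord) ∧
    (∀ g : κ → Ordinal.{u}, (∀ i : κ, g i < (lams i).ord) →
      ∃ α : Ordinal.{u}, α < c.ord ∧ ¬ neD D g (f α))}

/-!
A maximal pairwise `≠_D` family exists by Zorn's lemma; it is in particular covering, so its size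
`c` satisfies `T² ≤ T¹ ≤ c ≤ T⁰`, and everything reduces to `T⁰ ≤ T²`.

Let `F` be pairwise `≠_D` and `G` covering. Each `f ∈ F` agrees with some `g ∈ G` on a `D`-positive
set, and the members of `F` sent to the same `g` agree with `g` on sets that are pairwise disjoint
mod `D`; by the chain condition `|F| ≤ |G| · μ`. For infinite `μ` this gives `T⁰ ≤ max T² μ`, hence
`T⁰ ≤ T²` as `T⁰ > μ`.

For finite `μ` the chain condition leaves only finitely many ultrafilters `U ⊇ D`, and `D` is their
intersection. If `|G| < |F|`, then for each `U` some member of `F` is `≠_U` from all of `G`; gluing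
these along disjoint sets `A_U ∈ U` gives a function `≠_D` from all of `G`, a contradiction.
-/

open Cardinal Set Filter

namespace Ultrafilter

variable {α : Type*}

theorem exists_pairwiseDisjoint_mem {S : Set (Ultrafilter α)} (hS : S.Finite) :
    ∃ A : Ultrafilter α → Set α, (∀ U ∈ S, A U ∈ U) ∧ S.PairwiseDisjoint A := by
  have hsep (U V : Ultrafilter α) : ∃ X : Set α, U ≠ V → X ∈ U ∧ Xᶜ ∈ V := by
    by_cases hUV : U = V
    · exact ⟨∅, fun h => (h hUV).elim⟩
    obtain ⟨X, hXU, hXV⟩ := not_subset.1 fun h => hUV (coe_le_coe.1 h).symm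
    exact ⟨X, fun _ => ⟨hXU, compl_mem_iff_notMem.2 hXV⟩⟩
  choose X hX using hsep
  refine ⟨fun U => ⋂ V ∈ S \ {U}, X U V ∩ (X V U)ᶜ, fun U _ => ?_, fun U hU V hV hUV => ?_⟩
  · refine (biInter_mem (hS.subset sdiff_subset)).2 fun V hV => inter_mem ?_ ?_
    · exact (hX U V (Ne.symm hV.2)).1
    · exact (hX V U hV.2).2
  · refine Disjoint.mono (biInter_subset_of_mem ⟨hV, hUV.symm⟩) (biInter_subset_of_mem ⟨hU, hUV⟩) ?_
    exact (disjoint_compl_right.mono_left inter_subset_left).mono_right inter_subset_right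

theorem exists_forall_eventuallyEq {β : Type*} {S : Set (Ultrafilter α)} (hS : S.Finite)
    [Nonempty S] (h : S → α → β) :
    ∃ H : α → β, (∀ U : S, H =ᶠ[U] h U) ∧ ∀ i, ∃ U : S, H i = h U i := by
  classical
  obtain ⟨A, hAmem, hAdisj⟩ := exists_pairwiseDisjoint_mem hS
  let J (i : α) : S := if hi : ∃ U : S, i ∈ A U then hi.choose else Classical.arbitrary S
  refine ⟨fun i => h (J i) i, fun U => mem_of_superset (hAmem U U.2) fun i hi => ?_,
    fun i => ⟨J i, rfl⟩⟩
  have hex : ∃ U : S, i ∈ A U := ⟨U, hi⟩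
  have hJ : J i = U := by
    by_contra hne
    simp only [J, hex, dite_true] at hne
    exact hAdisj hex.choose.2 U.2 (fun h => hne (Subtype.ext h)) |>.ne_of_mem hex.choose_spec hi rfl
  simp [hJ]

end Ultrafilter

theorem Cardinal.mk_Iio_ord (c : Cardinal.{u}) : #(Iio c.ord) = lift.{u + 1} c := by
  rw [mk_Iio_ordinal, card_ord]

theorem exists_bijOn_Iio_ord {X : Type*} [Nonempty X] (M : Set X) [Small.{u} M] :
    ∃ (c : Cardinal.{u}) (f : Ordinal.{u} → X), BijOn f (Iio c.ord) M := by
  obtain ⟨e⟩ : Nonempty (Iio (#(Shrink.{u} M)).ord ≃ M) := by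
    rw [← lift_mk_eq', mk_Iio_ord, lift_lift, lift_mk_shrink]
  refine ⟨#(Shrink.{u} M), fun α => if h : α ∈ Iio _ then e ⟨α, h⟩ else Classical.arbitrary X,
    ?_, ?_, ?_⟩
  · intro α h
    simp [h]
  · intro α hα β hβ hαβ
    simp only [hα, hβ, dite_true, ← Subtype.ext_iff, e.injective.eq_iff] at hαβ
    exact congrArg Subtype.val hαβ
  · intro m hm
    exact ⟨e.symm ⟨m, hm⟩, (e.symm ⟨m, hm⟩).2, by simp⟩

namespace TInvariants

universe v

variable {κ : Type u}

/- A family of size `c` is the restriction of `f` to the ordinals below `c.ord`. -/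

def BoundedBy (lams : κ → Cardinal.{u}) (c : Cardinal.{u}) (f : Ordinal.{u} → κ → Ordinal.{u}) :
    Prop :=
  ∀ α : Ordinal.{u}, α < c.ord → ∀ i : κ, f α i < (lams i).ord

def PairwiseNeD (D : Filter κ) (c : Cardinal.{u}) (f : Ordinal.{u} → κ → Ordinal.{u}) : Prop :=
  ∀ α β : Ordinal.{u}, α < β → β < c.ord → neD D (f α) (f β)

def Covers (D : Filter κ) (lams : κ → Cardinal.{u}) (c : Cardinal.{u})
    (f : Ordinal.{u} → κ → Ordinal.{u}) : Prop :=
  ∀ g : κ → Ordinal.{u}, (∀ i : κ, g i < (lams i).ord) →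
    ∃ α : Ordinal.{u}, α < c.ord ∧ ¬ neD D g (f α)

/-- `P(κ)/D` has the `μ⁺`-chain condition: `A` is `D`-positive when `Aᶜ ∉ D`, and `A`, `B` are
disjoint mod `D` when `(A ∩ B)ᶜ ∈ D`. -/
def ChainCondition (D : Filter κ) (μ : Cardinal.{u}) : Prop :=
  ¬ ∃ A : Ordinal.{u} → Set κ,
    (∀ ε : Ordinal.{u}, ε < (Order.succ μ).ord → (A ε)ᶜ ∉ D) ∧
    (∀ ε ζ : Ordinal.{u}, ε < ζ → ζ < (Order.succ μ).ord → (A ε ∩ A ζ)ᶜ ∈ D)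

section Basic

variable {D : Filter κ}

theorem neD_comm {f g : κ → Ordinal.{u}} : neD D f g ↔ neD D g f := by
  simp only [neD, ne_comm]

theorem not_neD_self [D.NeBot] (f : κ → Ordinal.{u}) : ¬ neD D f f := by
  simp [neD]

theorem PairwiseNeD.neD_of_ne {c : Cardinal.{u}} {f : Ordinal.{u} → κ → Ordinal.{u}}
    (hf : PairwiseNeD D c f) {α β : Ordinal.{u}} (hα : α < c.ord) (hβ : β < c.ord) (hne : α ≠ β) :
    neD D (f α) (f β) := by
  rcases hne.lt_or_gt with h | h
  · exact hf α β h hβ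
  · exact neD_comm.1 (hf β α h hα)

end Basic

theorem exists_maximal_family (D : Filter κ) [D.NeBot] (lams : κ → Cardinal.{u}) :
    ∃ (c : Cardinal.{u}) (f : Ordinal.{u} → κ → Ordinal.{u}),
      BoundedBy lams c f ∧ PairwiseNeD D c f ∧ Covers D lams c f := by
  set P : Set (κ → Ordinal.{u}) := {g | ∀ i, g i < (lams i).ord}
  obtain ⟨M, hMmax⟩ : ∃ M, Maximal (fun M => M ⊆ P ∧ M.Pairwise (neD D)) M := by
    refine zorn_subset _ fun C hC hchain => ⟨⋃₀ C, ⟨?_, ?_⟩, fun _ => subset_sUnion_of_mem⟩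
    · exact sUnion_subset fun M hM => (hC hM).1
    · exact (pairwise_sUnion hchain.directedOn).2 fun M hM => (hC hM).2
  obtain ⟨hMP, hMpw⟩ := hMmax.prop
  have : Small.{u} P :=
    small_of_injective (f := fun g : P => fun i => (⟨g.1 i, g.2 i⟩ : Iio (lams i).ord))
      fun g h hgh => Subtype.ext <| funext fun i => congrArg Subtype.val (congrFun hgh i)
  have : Small.{u} M := small_subset hMP
  obtain ⟨c, f, hmaps, hinj, hsurj⟩ := exists_bijOn_Iio_ord M
  refine ⟨c, f, fun α hα => hMP (hmaps hα), fun α β hαβ hβ => ?_, fun g hg => ?_⟩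
  · exact hMpw (hmaps (hαβ.trans hβ)) (hmaps hβ) (hinj.ne (hαβ.trans hβ) hβ hαβ.ne)
  · obtain ⟨m, hm, hgm⟩ : ∃ m ∈ M, ¬ neD D g m := by
      by_contra! hall
      have hgM : g ∈ M := hMmax.mem_of_prop_insert ⟨insert_subset hg hMP,
        pairwise_insert.2 ⟨hMpw, fun m hm _ => ⟨hall m hm, neD_comm.1 (hall m hm)⟩⟩⟩
      exact not_neD_self g (hall g hgM)
    obtain ⟨α, hα, rfl⟩ := hsurj hm
    exact ⟨α, hα, hgm⟩

namespace ChainCondition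

variable {D : Filter κ} {μ : Cardinal.{u}}

theorem lift_mk_le (hcc : ChainCondition D μ) {ι : Type v} (A : ι → Set κ)
    (hpos : ∀ j, (A j)ᶜ ∉ D) (hdisj : Pairwise fun j k => (A j ∩ A k)ᶜ ∈ D) :
    lift.{u} #ι ≤ lift.{v} μ := by
  by_contra! h
  obtain ⟨e⟩ : Nonempty (Iio (Order.succ μ).ord ↪ ι) := by
    rw [← lift_mk_le', mk_Iio_ord, lift_lift]
    have := lift_le.{u + 1}.2 ((lift_succ μ).symm ▸ Order.succ_le_of_lt h)
    simpa using this
  refine hcc ⟨fun ε => if h : ε < _ then A (e ⟨ε, h⟩) else ∅, fun ε hε => ?_,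
    fun ε ζ hεζ hζ => ?_⟩
  · simpa [hε] using hpos _
  · simpa [hεζ.trans hζ, hζ] using hdisj fun h => hεζ.ne (congrArg Subtype.val (e.injective h))

theorem finite_ultrafilters_le (hcc : ChainCondition D μ) (hμ : μ < ℵ₀) :
    {U : Ultrafilter κ | ↑U ≤ D}.Finite := by
  by_contra hinf
  obtain ⟨m, rfl⟩ := lt_aleph0.1 hμ
  obtain ⟨T, hTD, hTcard⟩ := Set.Infinite.exists_subset_card_eq hinf (m + 1)
  obtain ⟨A, hAmem, hAdisj⟩ := Ultrafilter.exists_pairwiseDisjoint_mem T.finite_toSet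
  have := hcc.lift_mk_le (fun U : T => A U)
    (fun U hU => Ultrafilter.compl_notMem_iff.2 (hAmem U U.2) (hTD U.2 hU))
    (fun U V hUV => by
      dsimp only
      rw [(hAdisj U.2 V.2 fun h => hUV (Subtype.ext h)).inter_eq, compl_empty]
      exact univ_mem)
  simp [hTcard] at this

end ChainCondition

variable {D : Filter κ} {lams : κ → Cardinal.{u}} {c σ : Cardinal.{u}}
  {f g : Ordinal.{u} → κ → Ordinal.{u}}

theorem le_mul_of_chainCondition {μ : Cardinal.{u}} (hcc : ChainCondition D μ)
    (hf : BoundedBy lams c f) (hfD : PairwiseNeD D c f) (hg : Covers D lams σ g) :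
    c ≤ σ * μ := by
  choose Γ hΓ using fun α : Iio c.ord =>
    have ⟨γ, hγ, h⟩ := hg (f α) (hf α α.2)
    (⟨⟨γ, hγ⟩, h⟩ : ∃ γ : Iio σ.ord, ¬ neD D (f α) (g γ))
  have hfiber (γ : Iio σ.ord) : #(Γ ⁻¹' {γ}) ≤ lift.{u + 1} μ := by
    have := hcc.lift_mk_le (fun α : Γ ⁻¹' {γ} => {i | f α i = g γ i})
      (fun α => by have h := hΓ α; rwa [show Γ α = γ from α.2] at h)
      (fun α β hαβ => mem_of_superset (hfD.neD_of_ne α.1.2 β.1.2 fun h => hαβ (by ext; exact h))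
        fun i hi ⟨hα, hβ⟩ => hi (hα.trans hβ.symm))
    rwa [lift_id'.{u, u + 1}] at this
  simpa [mk_Iio_ord, ← lift_mul] using mk_le_mk_mul_of_mk_preimage_le Γ hfiber

theorem exists_forall_eventually_ne {U : Ultrafilter κ} (hU : ↑U ≤ D) (hfD : PairwiseNeD D c f)
    (hσc : σ < c) : ∃ α : Iio c.ord, ∀ γ : Iio σ.ord, ∀ᶠ i in U, f α i ≠ g γ i := by
  by_contra! h
  choose Γ hΓ using h
  refine hσc.not_ge (lift_le.1 ?_)
  rw [← mk_Iio_ord, ← mk_Iio_ord]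
  refine mk_le_of_injective (f := Γ) fun α β hαβ => Subtype.ext <| by_contra fun hne => ?_
  have hαβ_ne : ∀ᶠ i in U, f α i ≠ f β i := hU (hfD.neD_of_ne α.2 β.2 hne)
  obtain ⟨i, hne_i, hα_i, hβ_i⟩ := (hαβ_ne.and ((hΓ α).and (hαβ ▸ hΓ β))).exists
  exact hne_i (hα_i.trans hβ_i.symm)

theorem le_of_finite_ultrafilters_le [D.NeBot] (hfin : {U : Ultrafilter κ | ↑U ≤ D}.Finite)
    (hf : BoundedBy lams c f) (hfD : PairwiseNeD D c f) (hg : Covers D lams σ g) : c ≤ σ := by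
  by_contra! hσc
  set S := {U : Ultrafilter κ | ↑U ≤ D}
  have : Nonempty S := ⟨⟨Ultrafilter.of D, Ultrafilter.of_le D⟩⟩
  choose α hα using fun U : S => exists_forall_eventually_ne (g := g) U.2 hfD hσc
  obtain ⟨H, hHeq, hHval⟩ := Ultrafilter.exists_forall_eventuallyEq hfin fun U => f (α U)
  obtain ⟨γ, hγ, hHg⟩ := hg H fun i => by
    obtain ⟨U, hU⟩ := hHval i
    exact hU ▸ hf _ (α U).2 i
  refine hHg (mem_iff_ultrafilter.2 fun U hU => ?_)
  filter_upwards [hHeq ⟨U, hU⟩, hα ⟨U, hU⟩ ⟨γ, hγ⟩] with i hi hne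
  exact hi ▸ hne

theorem le_max_T2 [D.NeBot] {μ : Cardinal.{u}} (hcc : ChainCondition D μ)
    (hf : BoundedBy lams c f) (hfD : PairwiseNeD D c f) : c ≤ max (T2 D lams) μ := by
  obtain ⟨σ, g, hg, -, hgc⟩ := exists_maximal_family D lams
  obtain ⟨g, -, hgc⟩ : T2 D lams ∈ {c | ∃ f, BoundedBy lams c f ∧ Covers D lams c f} :=
    csInf_mem ⟨σ, g, hg, hgc⟩
  rcases lt_or_ge μ ℵ₀ with hμ | hμ
  · exact (le_of_finite_ultrafilters_le (hcc.finite_ultrafilters_le hμ) hf hfD hgc).trans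
      le_sup_left
  · exact (le_mul_of_chainCondition hcc hf hfD hgc).trans (mul_le_max_of_aleph0_le_right hμ)

end TInvariants

/-- If `P(κ)/D` satisfies the `μ⁺`-chain condition and `T⁰_D(λ̄) > μ`, then
`T⁰ = T¹ = T²` and the supremum in the definition of `T⁰_D(λ̄)` is attained. -/
theorem stmt_17 {κ : Type u} (D : Filter κ) [D.NeBot]
    (lams : κ → Cardinal.{u}) (μ : Cardinal.{u})
    (hcc : ¬ ∃ A : Ordinal.{u} → Set κ,
      (∀ ε : Ordinal.{u}, ε < (Order.succ μ).ord → (A ε)ᶜ ∉ D) ∧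
      (∀ ε ζ : Ordinal.{u}, ε < ζ → ζ < (Order.succ μ).ord → (A ε ∩ A ζ)ᶜ ∈ D))
    (hT : μ < T0 D lams) :
    T0 D lams = T1 D lams ∧ T0 D lams = T2 D lams ∧
    ∃ f : Ordinal.{u} → κ → Ordinal.{u},
      (∀ α : Ordinal.{u}, α < (T0 D lams).ord → ∀ i : κ, f α i < (lams i).ord) ∧
      (∀ α β : Ordinal.{u}, α < β → β < (T0 D lams).ord → neD D (f α) (f β)) := by
  obtain ⟨c, f, hf, hfD, hfc⟩ := TInvariants.exists_maximal_family D lams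
  have hT0_le : ∀ c' ∈ {c | ∃ f, TInvariants.BoundedBy lams c f ∧ TInvariants.PairwiseNeD D c f},
      c' ≤ max (T2 D lams) μ := fun _ ⟨_, hg, hgD⟩ => TInvariants.le_max_T2 hcc hg hgD
  have hT0 : T0 D lams ≤ max (T2 D lams) μ := csSup_le ⟨c, f, hf, hfD⟩ hT0_le
  have hT02 : T0 D lams ≤ T2 D lams := (le_max_iff.1 hT0).resolve_right hT.not_ge
  have hT21 : T2 D lams ≤ T1 D lams :=
    csInf_le_csInf (OrderBot.bddBelow _) ⟨c, f, hf, hfD, hfc⟩ fun _ ⟨g, hg, _, hgc⟩ => ⟨g, hg, hgc⟩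
  have hT1c : T1 D lams ≤ c := csInf_le (OrderBot.bddBelow _) ⟨f, hf, hfD, hfc⟩
  have hcT0 : c ≤ T0 D lams := le_csSup ⟨_, hT0_le⟩ ⟨f, hf, hfD⟩
  have hc : T0 D lams = c := le_antisymm (hT02.trans (hT21.trans hT1c)) hcT0
  refine ⟨le_antisymm (hT02.trans hT21) (hT1c.trans hcT0),
    le_antisymm hT02 (hT21.trans (hT1c.trans hcT0)), f, ?_, ?_⟩
  · exact hc ▸ hf
  · exact hc ▸ hfD
end

section
/- Let D be a filter on κ and B_i Boolean algebras with λ_i < Depth⁺(B_i) for each i < κ. If A ∈ D⁺ and ⟨μ_i : i < κ⟩ are regular cardinals with μ_i ≤ λ_i such that tcf(∏_{i<κ} μ_i / (D+A)) = μ is well defined, then μ < Depth⁺(∏_{i<κ} B_i / D). -/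
universe u

/-- `Depth⁺` of a binary relation `r` on `α`: the least cardinal `c` such that
there is no `r`-increasing sequence of length `c`. -/
noncomputable def depthPlus {α : Type u} (r : α → α → Prop) : Cardinal.{u} :=
  sInf {c : Cardinal.{u} |
    ¬ ∃ a : Ordinal.{u} → α, ∀ x y : Ordinal.{u}, x < y → y < c.ord → r (a x) (a y)}

/-- `(∏_i b i, <_D)` has true cofinality `lam`. -/
def TrueCofinalF {κ : Type u} (D : Filter κ) (b : κ → Ordinal.{u}) (lam : Cardinal.{u}) : Prop :=
  ∃ f : Ordinal.{u} → κ → Ordinal.{u},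
    (∀ β : Ordinal.{u}, β < lam.ord → ∀ i : κ, f β i < b i) ∧
    (∀ β γ : Ordinal.{u}, β < γ → γ < lam.ord → {i | f β i < f γ i} ∈ D) ∧
    (∀ g : κ → Ordinal.{u}, (∀ i : κ, g i < b i) →
      ∃ β : Ordinal.{u}, β < lam.ord ∧ {i | g i < f β i} ∈ D)

/-- If `lams i < Depth⁺(B i)`, `A` is `D`-positive, and regular `mus i ≤ lams i`
satisfy `tcf(∏ mus i / (D+A)) = μ`, then `μ < Depth⁺(∏ B i / D)` (where the strict
order of the reduced product is `f <_D g ↔ f ≤ g mod D ∧ ¬ g ≤ f mod D`). -/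
theorem stmt_18 {κ : Type u} (D : Filter κ) [D.NeBot]
    (B : κ → Type u) [∀ i, BooleanAlgebra (B i)]
    (lams : κ → Cardinal.{u})
    (hdepth : ∀ i, lams i < depthPlus (fun a b : B i => a < b))
    (A : Set κ) (hA : Aᶜ ∉ D)
    (mus : κ → Cardinal.{u})
    (hmus : ∀ i, (mus i).IsRegular ∧ mus i ≤ lams i)
    (μ : Cardinal.{u})
    (htcf : TrueCofinalF (D ⊓ Filter.principal A) (fun i => (mus i).ord) μ) :
    μ < depthPlus (fun f g : ∀ i, B i =>
      {i | f i ≤ g i} ∈ D ∧ {i | g i ≤ f i} ∉ D) := by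
  classical
  set r : (∀ i, B i) → (∀ i, B i) → Prop := fun f g =>
    {i | f i ≤ g i} ∈ D ∧ {i | g i ≤ f i} ∉ D with hr
  set S : Set Cardinal.{u} := {c : Cardinal.{u} |
    ¬ ∃ a : Ordinal.{u} → ∀ i, B i,
      ∀ x y : Ordinal.{u}, x < y → y < c.ord → r (a x) (a y)} with hSdef
  -- choose increasing sequences in each B i
  have ha : ∀ i, ∃ a : Ordinal.{u} → B i,
      ∀ x y : Ordinal.{u}, x < y → y < (lams i).ord → a x < a y := by
    intro i
    by_contra h
    exact absurd (csInf_le' (show lams i ∈ _ from h)) (not_le_of_gt (hdepth i))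
  choose a hainc using ha
  obtain ⟨f, hf1, hf2, -⟩ := htcf
  -- the increasing sequence in the product
  set F : Ordinal.{u} → ∀ i, B i :=
    fun β i => if i ∈ A then a i (f β i) else ⊥ with hF
  have key : ∀ x y : Ordinal.{u}, x < y → y < μ.ord → r (F x) (F y) := by
    intro x y hxy hy
    have hU : {i | i ∈ A → f x i < f y i} ∈ D := by
      have := hf2 x y hxy hy
      rwa [Filter.mem_inf_principal] at this
    have hstrict : ∀ i ∈ A, f x i < f y i → a i (f x i) < a i (f y i) := by
      intro i _ hlt
      refine hainc i _ _ hlt ?_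
      exact lt_of_lt_of_le (hf1 y hy i) (Cardinal.ord_le_ord.2 (hmus i).2)
    constructor
    · refine Filter.mem_of_superset hU ?_
      intro i hi
      simp only [Set.mem_setOf_eq, hF]
      by_cases hiA : i ∈ A
      · simp only [hiA, if_pos]
        exact le_of_lt (hstrict i hiA (hi hiA))
      · simp [hiA]
    · intro hV
      apply hA
      refine Filter.mem_of_superset (Filter.inter_mem hV hU) ?_
      rintro i ⟨hiV, hiU⟩
      by_contra hiA
      rw [Set.mem_compl_iff, not_not] at hiA
      have h1 : a i (f x i) < a i (f y i) := hstrict i hiA (hiU hiA)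
      have h2 : F y i ≤ F x i := hiV
      simp only [hF] at h2
      rw [if_pos hiA, if_pos hiA] at h2
      exact absurd (lt_of_lt_of_le h1 h2) (lt_irrefl _)
  -- S is nonempty
  have hSne : S.Nonempty := by
    refine ⟨Order.succ (Cardinal.mk (∀ i, B i)), ?_⟩
    simp only [hSdef, Set.mem_setOf_eq]
    rintro ⟨g, hg⟩
    set c : Cardinal.{u} := Order.succ (Cardinal.mk (∀ i, B i))
    haveI : IsWellOrder c.ord.ToType (· < ·) := isWellOrder_lt
    have hinj : Function.Injective
        (fun x : c.ord.ToType => g (Ordinal.typein (α := c.ord.ToType) (· < ·) x)) := by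
      intro x y hxy
      by_contra hne
      have htne : Ordinal.typein (α := c.ord.ToType) (· < ·) x ≠
          Ordinal.typein (α := c.ord.ToType) (· < ·) y :=
        fun h => hne (Ordinal.typein_injective _ h)
      rcases htne.lt_or_gt with h | h
      · have := hg _ _ h (Ordinal.typein_lt_self y)
        rw [show g (Ordinal.typein (α := c.ord.ToType) (· < ·) x) =
            g (Ordinal.typein (α := c.ord.ToType) (· < ·) y) from hxy] at this
        exact this.2 this.1
      · have := hg _ _ h (Ordinal.typein_lt_self x)
        rw [show g (Ordinal.typein (α := c.ord.ToType) (· < ·) x) =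
            g (Ordinal.typein (α := c.ord.ToType) (· < ·) y) from hxy] at this
        exact this.2 this.1
    have hle : Cardinal.mk c.ord.ToType ≤ Cardinal.mk (∀ i, B i) := Cardinal.mk_le_of_injective hinj
    rw [Cardinal.mk_toType, Cardinal.card_ord] at hle
    exact absurd hle (not_le_of_gt (Order.lt_succ _))
  have hall : ∀ c ∈ S, μ < c := by
    intro c hc
    by_contra hcle
    push_neg at hcle
    exact hc ⟨F, fun x y hxy hy => key x y hxy (lt_of_lt_of_le hy (Cardinal.ord_le_ord.2 hcle))⟩
  have heq : depthPlus r = sInf S := rfl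
  rw [heq]
  exact hall _ (csInf_mem hSne)
end

section
/- Let ⟨λ_i : i < κ⟩ be a sequence of regular cardinals, I an ideal on κ, and θ a regular cardinal with liminf_I⟨λ_i⟩ ≥ θ. For any ideal J on κ extending I and any A ∈ J⁺, the following are equivalent: (a) there is h ∈ ∏_{i<κ} λ_i such that for every ε < θ the set {i ∈ A : h(i) < ε} ∈ J; (b) the reduced product (∏_{i<κ} λ_i, <_{J+(κ\A)}) is θ⁺-directed. -/
universe u

open Cardinal Ordinal

/-! (a) ⇒ (b): enumerate the `≤ θ` given functions `F x` by distinct ordinals `e x < θ`, and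
let `g i` be the supremum of those `F x i` with `e x < h i`. There are at most `|h i| < λᵢ` of
them, so `g i < λᵢ` by regularity, and `g i < F x i` forces `h i ≤ e x`, which happens only on a
`J`-small part of `A` because `e x + 1 < θ`.

(b) ⇒ (a): bound the `θ` functions `i ↦ ε` (truncated to `0` where `ε ≥ λᵢ`), `ε < θ`. The
bound `g` satisfies `g i ≥ ε` for `J`-almost all `i ∈ A` with `λᵢ > |ε|`, and the remaining
indices with `λᵢ ≤ |ε|` form a set in `I ⊆ J` since `liminf_I ⟨λᵢ⟩ ≥ θ`. -/

theorem Ordinal.exists_injective_lt_ord {ι : Type u} {c : Cardinal.{u}} (hι : #ι ≤ c) :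
    ∃ e : ι → Ordinal.{u}, Function.Injective e ∧ ∀ x, e x < c.ord := by
  obtain ⟨e⟩ := (Cardinal.le_def _ _).mp (hι.trans_eq (card_ord c ▸ mk_toType c.ord).symm)
  exact ⟨fun x => ToType.mk.symm (e x),
    fun x y hxy => e.injective (ToType.mk.symm.injective (Subtype.ext hxy)),
    fun x => (ToType.mk.symm (e x)).2⟩

theorem Ordinal.mk_setOf_lt_le_card {ι : Type u} {e : ι → Ordinal.{u}}
    (he : Function.Injective e) (o : Ordinal.{u}) : #{x // e x < o} ≤ o.card := by
  rw [← mk_toType o]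
  exact mk_le_of_injective (f := fun x : {x // e x < o} => ToType.mk ⟨e x, x.2⟩)
    fun x y hxy => Subtype.ext (he (congrArg Subtype.val (ToType.mk.injective hxy)))

theorem exists_lt_ord_forall_lt_imp_le {κ ι : Type u} {lams : κ → Cardinal.{u}}
    (hreg : ∀ i, (lams i).IsRegular) {h : κ → Ordinal.{u}} (hh : ∀ i, h i < (lams i).ord)
    (F : ι → κ → Ordinal.{u}) (hF : ∀ x i, F x i < (lams i).ord) {e : ι → Ordinal.{u}}
    (he : Function.Injective e) :
    ∃ g : κ → Ordinal.{u}, (∀ i, g i < (lams i).ord) ∧ ∀ x i, g i < F x i → h i ≤ e x := by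
  refine ⟨fun i => ⨆ x : {x // e x < h i}, F x i, fun i => ?_, fun x i hlt => ?_⟩
  · refine iSup_lt_of_lt_cof ?_ fun x => hF x i
    rw [(hreg i).cof_ord]
    exact (mk_setOf_lt_le_card he (h i)).trans_lt (lt_ord.mp (hh i))
  · by_contra! hx
    exact (Ordinal.le_iSup (fun y : {x // e x < h i} => F y i) ⟨x, hx⟩).not_gt hlt

theorem forall_exists_bound_of_exists_unbounded {κ : Type u} {J : Set (Set κ)}
    (hJdown : ∀ A B : Set κ, A ⊆ B → B ∈ J → A ∈ J) {lams : κ → Cardinal.{u}}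
    {θ : Cardinal.{u}} (A : Set κ) (hreg : ∀ i, (lams i).IsRegular) (hθ : ℵ₀ ≤ θ)
    {h : κ → Ordinal.{u}} (hh : ∀ i, h i < (lams i).ord)
    (hJh : ∀ ε < θ.ord, {i | i ∈ A ∧ h i < ε} ∈ J) (ι : Type u) (F : ι → κ → Ordinal.{u})
    (hι : #ι ≤ θ) (hF : ∀ x i, F x i < (lams i).ord) :
    ∃ g : κ → Ordinal.{u}, (∀ i, g i < (lams i).ord) ∧
      ∀ x, {i | i ∈ A ∧ g i < F x i} ∈ J := by
  obtain ⟨e, he, heθ⟩ := exists_injective_lt_ord hι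
  obtain ⟨g, hg, hgF⟩ := exists_lt_ord_forall_lt_imp_le hreg hh F hF he
  refine ⟨g, hg, fun x => hJdown _ _ ?_ (hJh _ ((isSuccLimit_ord hθ).succ_lt (heθ x)))⟩
  rintro i ⟨hiA, hi⟩
  exact ⟨hiA, Order.lt_succ_iff.mpr (hgF x i hi)⟩

theorem exists_unbounded_of_forall_exists_bound {κ : Type u} {J : Set (Set κ)}
    (hJdown : ∀ A B : Set κ, A ⊆ B → B ∈ J → A ∈ J) {lams : κ → Cardinal.{u}}
    {θ : Cardinal.{u}} (A : Set κ)
    (hJunion : ∀ A B : Set κ, A ∈ J → B ∈ J → A ∪ B ∈ J) (hpos : ∀ i, 0 < lams i)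
    (hsmall : ∀ μ < θ, {i | lams i ≤ μ} ∈ J)
    (hbound : ∀ (ι : Type u) (F : ι → κ → Ordinal.{u}), #ι ≤ θ →
      (∀ x i, F x i < (lams i).ord) → ∃ g : κ → Ordinal.{u}, (∀ i, g i < (lams i).ord) ∧
        ∀ x, {i | i ∈ A ∧ g i < F x i} ∈ J) :
    ∃ h : κ → Ordinal.{u}, (∀ i, h i < (lams i).ord) ∧
      ∀ ε < θ.ord, {i | i ∈ A ∧ h i < ε} ∈ J := by
  let F : θ.ord.ToType → κ → Ordinal.{u} := fun x i =>
    if (ToType.mk.symm x : Ordinal) < (lams i).ord then ToType.mk.symm x else 0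
  have hF : ∀ x i, F x i < (lams i).ord := fun x i => by
    by_cases hx : (ToType.mk.symm x : Ordinal) < (lams i).ord
    · simp [F, hx]
    · simpa [F, hx] using hpos i
  obtain ⟨g, hg, hgF⟩ := hbound _ F (by rw [mk_toType, card_ord]) hF
  refine ⟨g, hg, fun ε hε => ?_⟩
  refine hJdown _ _ ?_ (hJunion _ _ (hgF (ToType.mk ⟨ε, hε⟩)) (hsmall _ (lt_ord.mp hε)))
  rintro i ⟨hiA, hi⟩
  by_cases hεi : ε < (lams i).ord
  · exact Or.inl ⟨hiA, by simpa [F, hεi] using hi⟩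
  · exact Or.inr (ord_le.mp (not_lt.mp hεi))

theorem stmt_19_general {κ : Type u} (I J : Set (Set κ)) (hIJ : I ⊆ J)
    (hJdown : ∀ A B : Set κ, A ⊆ B → B ∈ J → A ∈ J)
    (hJunion : ∀ A B : Set κ, A ∈ J → B ∈ J → A ∪ B ∈ J)
    (lams : κ → Cardinal.{u}) (hreglams : ∀ i, (lams i).IsRegular)
    (θ : Cardinal.{u}) (hθreg : θ.IsRegular)
    (hliminf : ∀ μ : Cardinal.{u}, μ < θ → {i | lams i ≤ μ} ∈ I)
    (A : Set κ) :
    (∃ h : κ → Ordinal.{u}, (∀ i : κ, h i < (lams i).ord) ∧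
      ∀ ε : Ordinal.{u}, ε < θ.ord → {i | i ∈ A ∧ h i < ε} ∈ J) ↔
    (∀ (ι : Type u) (F : ι → κ → Ordinal.{u}),
      Cardinal.mk ι ≤ θ → (∀ x : ι, ∀ i : κ, F x i < (lams i).ord) →
      ∃ g : κ → Ordinal.{u}, (∀ i : κ, g i < (lams i).ord) ∧
        ∀ x : ι, {i | i ∈ A ∧ g i < F x i} ∈ J) :=
  ⟨fun ⟨_, hh, hJh⟩ => forall_exists_bound_of_exists_unbounded hJdown A hreglams
      hθreg.aleph0_le hh hJh,
    exists_unbounded_of_forall_exists_bound hJdown A hJunion (fun i => (hreglams i).pos)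
      (fun μ hμ => hIJ (hliminf μ hμ))⟩

/-- For ideals `I ⊆ J` on `κ`, regular `lams i` with `liminf_I ⟨lams i⟩ ≥ θ`
(`θ` regular) and `A ∈ J⁺`, the following are equivalent:
(a) there is `h ∈ ∏ lams i` with `{i ∈ A : h i < ε} ∈ J` for every `ε < θ`;
(b) `(∏ lams i, <_{J+(κ∖A)})` is `θ⁺`-directed. -/
theorem stmt_19 {κ : Type u} (I J : Set (Set κ)) (hIJ : I ⊆ J)
    (hJdown : ∀ A B : Set κ, A ⊆ B → B ∈ J → A ∈ J)
    (hJunion : ∀ A B : Set κ, A ∈ J → B ∈ J → A ∪ B ∈ J)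
    (lams : κ → Cardinal.{u}) (hreglams : ∀ i, (lams i).IsRegular)
    (θ : Cardinal.{u}) (hθreg : θ.IsRegular)
    (hliminf : ∀ μ : Cardinal.{u}, μ < θ → {i | lams i ≤ μ} ∈ I)
    (A : Set κ) (hA : A ∉ J) :
    (∃ h : κ → Ordinal.{u}, (∀ i : κ, h i < (lams i).ord) ∧
      ∀ ε : Ordinal.{u}, ε < θ.ord → {i | i ∈ A ∧ h i < ε} ∈ J) ↔
    (∀ (ι : Type u) (F : ι → κ → Ordinal.{u}),
      Cardinal.mk ι ≤ θ → (∀ x : ι, ∀ i : κ, F x i < (lams i).ord) →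
      ∃ g : κ → Ordinal.{u}, (∀ i : κ, g i < (lams i).ord) ∧
        ∀ x : ι, {i | i ∈ A ∧ g i < F x i} ∈ J) :=
  stmt_19_general I J hIJ hJdown hJunion lams hreglams θ hθreg hliminf A
end
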